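/- Let G be a nilpotent group and K an upper-finite normal subgroup of G. Then for every m ≥ 1, the iterated commutator subgroup [K, G, …, G] (m copies of G) is upper-finite. -/

import Mathlib

/-- A group is upper-finite if every finitely generated quotient of it is finite. -/
def UpperFinite (G : Type*) [Group G] : Prop :=
  ∀ (N : Subgroup G) [N.Normal], Group.FG (G ⧸ N) → Finite (G ⧸ N)

/-- The iterated commutator subgroup `[K, ^m G]`: `[K, ^0 G] = K`,
`[K, ^{m+1} G] = [[K, ^m G], G]`. -/
def iterCommutator {G : Type*} [Group G] (K : Subgroup G) : ℕ → Subgroup G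
  | 0 => K
  | m + 1 => ⁅iterCommutator K m, (⊤ : Subgroup G)⁆

/-! Each layer `[K, ^m G] / [K, ^(m+1) G]` is upper-finite: the first is a quotient of `K`, and
each further one is an abelian group generated by the images of the previous layer under the
homomorphisms `x ↦ ⁅x, g⁆`. Such a group is upper-finite because an infinite finitely generated
abelian group maps onto `ℤ`, whereas every homomorphism from an upper-finite group to `ℤ` is
trivial. As `G` is nilpotent the series reaches `⊥`, and upper-finiteness climbs back up the series
since it is closed under extensions. -/

theorem Group.fg_of_isCyclic (G : Type*) [Group G] [IsCyclic G] : Group.FG G := by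
  obtain ⟨g, hg⟩ := isCyclic_iff_exists_zpowers_eq_top.mp ‹_›
  exact ⟨⟨{g}, by rw [Finset.coe_singleton, ← Subgroup.zpowers_eq_closure, hg]⟩⟩

theorem CommGroup.exists_surjective_multiplicativeInt (G : Type*) [CommGroup G] [Group.FG G]
    [Infinite G] : ∃ ψ : G →* Multiplicative ℤ, Function.Surjective ψ := by
  obtain ⟨ι, J, _, _, p, hp, e, ⟨φ⟩⟩ := CommGroup.equiv_free_prod_prod_multiplicative_zmod G
  cases isEmpty_or_nonempty J with
  | inl hJ =>
    have : ∀ i, NeZero (p i ^ e i) := fun i => ⟨pow_ne_zero _ (hp i).ne_zero⟩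
    have : Finite G := Finite.of_equiv _ φ.symm.toEquiv
    exact (not_finite G).elim
  | inr hJ =>
    obtain ⟨j⟩ := hJ
    exact ⟨(Pi.evalMonoidHom _ j).comp ((MonoidHom.fst _ _).comp φ.toMonoidHom),
      (Function.surjective_eval j).comp (Prod.fst_surjective.comp φ.surjective)⟩

namespace UpperFinite

variable {G H : Type*} [Group G] [Group H]

theorem of_surjective (hG : UpperFinite G) {f : G →* H} (hf : Function.Surjective f) :
    UpperFinite H := by
  intro N _ hfg
  let g := (QuotientGroup.mk' N).comp f
  let e := QuotientGroup.quotientKerEquivOfSurjective g ((QuotientGroup.mk'_surjective N).comp hf)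
  have := hG g.ker (Group.fg_of_surjective (f := e.symm.toMonoidHom) e.symm.surjective)
  exact Finite.of_equiv _ e.toEquiv

theorem of_mulEquiv (hG : UpperFinite G) (e : G ≃* H) : UpperFinite H :=
  hG.of_surjective (f := e.toMonoidHom) e.surjective

theorem of_finite [Finite G] : UpperFinite G :=
  fun _ _ _ => inferInstance

theorem finite_of_fg [Group.FG G] (hG : UpperFinite G) : Finite G :=
  have := hG ⊥ inferInstance
  Finite.of_equiv _ QuotientGroup.quotientBot.toEquiv

theorem of_normal_of_quotient (N : Subgroup G) [N.Normal] (hN : UpperFinite N)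
    (hQ : UpperFinite (G ⧸ N)) : UpperFinite G := by
  intro M _ hfg
  let π := QuotientGroup.mk' M
  let Nbar := N.map π
  have : Nbar.Normal := .map ‹_› π (QuotientGroup.mk'_surjective M)
  have hπ : N ≤ Nbar.comap π := Subgroup.le_comap_map π N
  have : Finite ((G ⧸ M) ⧸ Nbar) :=
    (hQ.of_surjective (QuotientGroup.map_surjective_of_surjective N Nbar π
      ((QuotientGroup.mk_surjective).comp (QuotientGroup.mk'_surjective M)) hπ)).finite_of_fg
  -- Schreier: a finite-index subgroup of a finitely generated group is finitely generated.
  have : Nbar.FiniteIndex := Nbar.finiteIndex_of_finite_quotient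
  have : Finite Nbar := (hN.of_surjective (π.subgroupMap_surjective N)).finite_of_fg
  exact Finite.of_equiv _ (Subgroup.groupEquivQuotientProdSubgroup (s := Nbar)).symm

theorem monoidHom_int_eq_one (hG : UpperFinite G) (χ : G →* Multiplicative ℤ) : χ = 1 := by
  have := Group.fg_of_isCyclic χ.range
  have : Finite χ.range := (hG.of_surjective χ.rangeRestrict_surjective).finite_of_fg
  ext a
  exact (χ.range.subtype.isOfFinOrder (isOfFinOrder_of_finite (χ.rangeRestrict a))).eq_one'

open scoped IsMulCommutative in
theorem of_iSup_range_eq_top [IsMulCommutative H] {ι : Type*} (hG : UpperFinite G)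
    (f : ι → G →* H) (hf : ⨆ i, (f i).range = ⊤) : UpperFinite H := by
  intro N _ hfg
  by_contra hinf
  have : Infinite (H ⧸ N) := not_finite_iff_infinite.mp hinf
  obtain ⟨ψ, hψ⟩ := CommGroup.exists_surjective_multiplicativeInt (H ⧸ N)
  have hψN : ψ.comp (QuotientGroup.mk' N) = 1 := MonoidHom.ker_eq_top_iff.mp <| top_le_iff.mp <|
    hf ▸ iSup_le fun i => (MonoidHom.range_le_ker_iff _ _).mpr (hG.monoidHom_int_eq_one _)
  obtain ⟨x, hx⟩ := hψ.comp (QuotientGroup.mk'_surjective N) (Multiplicative.ofAdd 1)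
  rw [← MonoidHom.coe_comp, hψN, MonoidHom.one_apply] at hx
  exact absurd hx (by decide)

end UpperFinite

section CommutatorQuotient

open Subgroup
open scoped commutatorElement

variable {G : Type*} [Group G]

theorem isMulCommutative_quotient_commutator_top (Q : Subgroup G) [Q.Normal] :
    IsMulCommutative (Q ⧸ ⁅Q, (⊤ : Subgroup G)⁆.subgroupOf Q) :=
  Normal.quotient_commutative_iff_commutator_le.mpr <| commutator_le.mpr fun x _ y _ =>
    mem_subgroupOf.mpr (commutator_mem_commutator x.2 (mem_top (y : G)))

theorem commutatorElement_mul_left_mem {Q : Subgroup G} [Q.Normal] {x y g : G}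
    (hyg : ⁅y, g⁆ ∈ Q) : ⁅x * y, g⁆⁻¹ * (⁅x, g⁆ * ⁅y, g⁆) ∈ ⁅Q, (⊤ : Subgroup G)⁆ := by
  have hx : ⁅⁅y, g⁆⁻¹, x⁆ ∈ ⁅Q, (⊤ : Subgroup G)⁆ :=
    commutator_mem_commutator (inv_mem hyg) (mem_top x)
  have hxg : ⁅⁅y, g⁆⁻¹, ⁅x, g⁆⁻¹⁆ ∈ ⁅Q, (⊤ : Subgroup G)⁆ :=
    commutator_mem_commutator (inv_mem hyg) (mem_top _)
  have key : ⁅x * y, g⁆⁻¹ * (⁅x, g⁆ * ⁅y, g⁆) =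
      ⁅x, g⁆⁻¹ * ⁅⁅y, g⁆⁻¹, x⁆⁻¹ * ⁅x, g⁆⁻¹⁻¹ * ⁅⁅y, g⁆⁻¹, ⁅x, g⁆⁻¹⁆⁻¹ := by
    simp only [commutatorElement_def]
    group
  rw [key]
  exact mul_mem (Normal.conj_mem inferInstance _ (inv_mem hx) _) (inv_mem hxg)

variable (P : Subgroup G) [P.Normal]

def commutatorQuotientHom (g : G) :
    P ⧸ ⁅P, (⊤ : Subgroup G)⁆.subgroupOf P →*
      ↥⁅P, (⊤ : Subgroup G)⁆ ⧸
        ⁅⁅P, (⊤ : Subgroup G)⁆, (⊤ : Subgroup G)⁆.subgroupOf ⁅P, (⊤ : Subgroup G)⁆ :=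
  QuotientGroup.lift _
    (MonoidHom.mk'
      (fun x => QuotientGroup.mk ⟨⁅(x : G), g⁆, commutator_mem_commutator x.2 (mem_top g)⟩)
      fun _ y => by
        rw [← QuotientGroup.mk_mul, QuotientGroup.eq, mem_subgroupOf]
        exact commutatorElement_mul_left_mem (commutator_mem_commutator y.2 (mem_top g)))
    fun _ hx => (QuotientGroup.eq_one_iff _).mpr <|
      mem_subgroupOf.mpr (commutator_mem_commutator (mem_subgroupOf.mp hx) (mem_top g))

theorem iSup_range_commutatorQuotientHom : ⨆ g, (commutatorQuotientHom P g).range = ⊤ := by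
  set T := ⨆ g, (commutatorQuotientHom P g).range
  have hT : ⁅P, (⊤ : Subgroup G)⁆ ≤
      (T.comap (QuotientGroup.mk' _)).map ⁅P, (⊤ : Subgroup G)⁆.subtype :=
    commutator_le.mpr fun p hp g _ =>
      ⟨_, le_iSup (fun g => (commutatorQuotientHom P g).range) g ⟨QuotientGroup.mk ⟨p, hp⟩, rfl⟩,
        rfl⟩
  refine eq_top_iff.mpr fun z _ => ?_
  obtain ⟨z, rfl⟩ := QuotientGroup.mk_surjective z
  obtain ⟨z', hz', hzz'⟩ := hT z.2
  rwa [Subtype.ext hzz'] at hz'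

theorem UpperFinite.quotient_commutator_top
    (hP : UpperFinite (P ⧸ ⁅P, (⊤ : Subgroup G)⁆.subgroupOf P)) :
    UpperFinite (↥⁅P, (⊤ : Subgroup G)⁆ ⧸
      ⁅⁅P, (⊤ : Subgroup G)⁆, (⊤ : Subgroup G)⁆.subgroupOf ⁅P, (⊤ : Subgroup G)⁆) :=
  have := isMulCommutative_quotient_commutator_top ⁅P, (⊤ : Subgroup G)⁆
  hP.of_iSup_range_eq_top _ (iSup_range_commutatorQuotientHom P)

theorem UpperFinite.of_commutator_top (h : UpperFinite ↥⁅P, (⊤ : Subgroup G)⁆)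
    (hP : UpperFinite (P ⧸ ⁅P, (⊤ : Subgroup G)⁆.subgroupOf P)) : UpperFinite P :=
  .of_normal_of_quotient _ (h.of_mulEquiv (subgroupOfEquivOfLe (commutator_le_left P ⊤)).symm) hP

end CommutatorQuotient

section IterCommutator

variable {G : Type*} [Group G] (K : Subgroup G)

instance iterCommutator_normal [K.Normal] (m : ℕ) : (iterCommutator K m).Normal := by
  induction m with
  | zero => assumption
  | succ m _ => exact Subgroup.commutator_normal _ _

theorem iterCommutator_le_lowerCentralSeries (m : ℕ) :
    iterCommutator K m ≤ (⊤ : Subgroup G).lowerCentralSeries m := by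
  induction m with
  | zero => exact le_top
  | succ m ih => exact Subgroup.commutator_mono ih le_rfl

variable {K} in
theorem UpperFinite.quotient_iterCommutator_succ [K.Normal] (hK : UpperFinite K) (m : ℕ) :
    UpperFinite
      (iterCommutator K m ⧸ (iterCommutator K (m + 1)).subgroupOf (iterCommutator K m)) := by
  induction m with
  | zero =>
    exact UpperFinite.of_surjective (G := iterCommutator K 0) hK (QuotientGroup.mk'_surjective _)
  | succ m ih => exact ih.quotient_commutator_top _

end IterCommutator

theorem stmt_15_general (G : Type) [Group G] (hnil : Group.IsNilpotent G)
    (K : Subgroup G) [K.Normal] (hK : UpperFinite K)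
    (m : ℕ) :
    UpperFinite (iterCommutator K m) := by
  obtain ⟨n, hn⟩ := Subgroup.nilpotent_iff_lowerCentralSeries.mp hnil
  suffices ∀ k j, n ≤ j + k → UpperFinite (iterCommutator K j) from this n m (Nat.le_add_left n m)
  intro k
  induction k with
  | zero =>
    intro j hj
    have : iterCommutator K j = ⊥ := le_bot_iff.mp <| hn ▸
      (iterCommutator_le_lowerCentralSeries K j).trans (Subgroup.lowerCentralSeries_antitone _ hj)
    rw [this]
    exact .of_finite
  | succ k ih =>
    intro j hj
    exact .of_commutator_top _ (ih (j + 1) (by omega)) (hK.quotient_iterCommutator_succ j)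

/-- if `K` is an upper-finite normal subgroup of a nilpotent group `G`,
then `[K, ^m G]` is upper-finite for every `m ≥ 1`. -/
theorem stmt_15 (G : Type) [Group G] (hnil : Group.IsNilpotent G)
    (K : Subgroup G) [K.Normal] (hK : UpperFinite K)
    (m : ℕ) (hm : 1 ≤ m) :
    UpperFinite (iterCommutator K m) :=
  stmt_15_general G hnil K hK m
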